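/- arXiv:1303.2478 — 3 statements merged into one kernel-verified Lean document; each statement's English description precedes it below -/
import Mathlib

section
/- For every finite connected simple graph G with at least one edge, the vertex cover number and the connected vertex cover number satisfy τ(G) ≤ τ_c(G) ≤ 2·τ(G) − 1; in particular 1 ≤ τ_c(G)/τ(G) < 2. -/
open SimpleGraph

/-- `C` is a vertex cover of `G`: every edge of `G` has an endpoint in `C`. -/
def IsVertexCover {V : Type} (G : SimpleGraph V) (C : Set V) : Prop :=
  ∀ ⦃u v : V⦄, G.Adj u v → u ∈ C ∨ v ∈ C

/-- `C` is a connected vertex cover of `G`: a vertex cover inducing a connected subgraph. -/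
def IsConnectedVertexCover {V : Type} (G : SimpleGraph V) (C : Set V) : Prop :=
  _root_.IsVertexCover G C ∧ (G.induce C).Connected

/-- The vertex cover number `τ(G)`. -/
noncomputable def tau {V : Type} (G : SimpleGraph V) : ℕ :=
  sInf {n | ∃ C : Set V, _root_.IsVertexCover G C ∧ C.ncard = n}

/-- The connected vertex cover number `τ_c(G)`. -/
noncomputable def tauc {V : Type} (G : SimpleGraph V) : ℕ :=
  sInf {n | ∃ C : Set V, IsConnectedVertexCover G C ∧ C.ncard = n}

/-!
Start from a minimum vertex cover `C`. Every vertex outside `C` has all its neighbours in `C`, so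
as long as `G[C]` is disconnected, connectivity of `G` yields a vertex outside `C` adjacent to two
different components of `G[C]`; adding it lowers the number of components. `G[C]` has at most
`|C| = τ(G)` components, so at most `τ(G) - 1` vertices are added before the cover is connected.
-/

namespace SimpleGraph

variable {V : Type} {G : SimpleGraph V}

theorem card_connectedComponent_le_card [Finite V] :
    Nat.card G.ConnectedComponent ≤ Nat.card V :=
  Nat.card_le_card_of_surjective _ Quot.mk_surjective

theorem card_connectedComponent_induce_insert_lt [Finite V] {s : Set V} {a b : s} {w : V}
    (hab : ¬ (G.induce s).Reachable a b) (haw : G.Adj a w) (hwb : G.Adj w b) :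
    Nat.card (G.induce (insert w s)).ConnectedComponent <
      Nat.card (G.induce s).ConnectedComponent := by
  have hw : w ∈ insert w s := Set.mem_insert w s
  have hreach_a : (G.induce (insert w s)).Reachable (Set.inclusion (Set.subset_insert w s) a)
      ⟨w, hw⟩ := Adj.reachable haw
  have hreach_b : (G.induce (insert w s)).Reachable ⟨w, hw⟩
      (Set.inclusion (Set.subset_insert w s) b) := Adj.reachable hwb
  let f := ConnectedComponent.map (G.induceHomOfLE (Set.subset_insert w s)).toHom
  have hsurj : Function.Surjective f := by
    refine ConnectedComponent.ind fun ⟨z, hz⟩ => ?_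
    rcases Set.mem_insert_iff.mp hz with rfl | hz
    · exact ⟨(G.induce s).connectedComponentMk a, ConnectedComponent.sound hreach_a⟩
    · exact ⟨(G.induce s).connectedComponentMk ⟨z, hz⟩, rfl⟩
  have hninj : ¬ Function.Injective f := fun hinj =>
    hab <| ConnectedComponent.exact <| hinj <| ConnectedComponent.sound (hreach_a.trans hreach_b)
  have := Fintype.ofFinite (G.induce s).ConnectedComponent
  have := Fintype.ofFinite (G.induce (insert w s)).ConnectedComponent
  simpa only [Nat.card_eq_fintype_card] using
    Fintype.card_lt_of_surjective_not_injective f hsurj hninj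

namespace IsVertexCover

variable {C : Set V}

theorem nonempty (hC : G.IsVertexCover C) (hG : G.edgeSet.Nonempty) : C.Nonempty := by
  obtain ⟨e, he⟩ := hG
  induction e using Sym2.ind with
  | h u v => exact (hC he).elim (⟨u, ·⟩) (⟨v, ·⟩)

/-- A walk in `G` from `a` to `b` leaves the set of vertices within one step of the component of
`a` in `G[C]`; it can only do so through a vertex outside `C`, whose neighbours all lie in `C`. -/
theorem exists_adj_adj_of_not_reachable (hC : G.IsVertexCover C) (hG : G.Preconnected)
    {a b : C} (hab : ¬ (G.induce C).Reachable a b) :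
    ∃ c d : C, ¬ (G.induce C).Reachable c d ∧ ∃ w, G.Adj c w ∧ G.Adj w d := by
  let S : Set V := {x | ∃ c : C, (G.induce C).Reachable a c ∧ (c.1 = x ∨ G.Adj c x)}
  have hbS : b.1 ∉ S := by
    rintro ⟨c, hac, hcb | hcb⟩
    · exact hab (Subtype.ext hcb ▸ hac)
    · exact hab (hac.trans (Adj.reachable (G := G.induce C) hcb))
  obtain ⟨⟨⟨x, y⟩, hxy⟩, -, ⟨c, hac, hcx⟩, hyS⟩ :=
    (hG a b).some.exists_boundary_dart S ⟨a, .refl a, .inl rfl⟩ hbS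
  rcases hcx with rfl | hcx
  · exact absurd ⟨c, hac, .inr hxy⟩ hyS
  have hx : x ∉ C := fun hx =>
    hyS ⟨⟨x, hx⟩, hac.trans (Adj.reachable (G := G.induce C) hcx), .inr hxy⟩
  have hy : y ∈ C := (hC hxy).resolve_left hx
  exact ⟨c, ⟨y, hy⟩, fun hcy => hyS ⟨⟨y, hy⟩, hac.trans hcy, .inl rfl⟩, x, hcx, hxy⟩

theorem exists_connected_superset [Finite V] (hC : G.IsVertexCover C) (hG : G.Preconnected)
    (hne : C.Nonempty) :
    ∃ D, C ⊆ D ∧ G.IsVertexCover D ∧ (G.induce D).Connected ∧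
      D.ncard + 1 ≤ C.ncard + Nat.card (G.induce C).ConnectedComponent := by
  induction hk : Nat.card (G.induce C).ConnectedComponent using Nat.strong_induction_on
    generalizing C with
  | _ k ih =>
  have : Nonempty C := hne.to_subtype
  by_cases hconn : (G.induce C).Preconnected
  · have : 0 < k := hk ▸ Nat.card_pos
    exact ⟨C, subset_rfl, hC, ⟨hconn⟩, by omega⟩
  obtain ⟨a, b, hab⟩ : ∃ a b : C, ¬ (G.induce C).Reachable a b := by
    simpa [Preconnected] using hconn
  obtain ⟨c, d, hcd, w, hcw, hwd⟩ := hC.exists_adj_adj_of_not_reachable hG hab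
  have hlt := card_connectedComponent_induce_insert_lt hcd hcw hwd
  obtain ⟨D, hCD, hD, hDconn, hDcard⟩ :=
    ih _ (hk ▸ hlt) (hC.subset (Set.subset_insert w C)) (Set.insert_nonempty w C) rfl
  have := Set.ncard_insert_le w C
  exact ⟨D, (Set.subset_insert w C).trans hCD, hD, hDconn, by omega⟩

end IsVertexCover

end SimpleGraph

section CoverNumbers

variable {V : Type} {G : SimpleGraph V} {C : Set V}

theorem isVertexCover_iff : _root_.IsVertexCover G C ↔ G.IsVertexCover C :=
  Iff.rfl

theorem tau_le_ncard (hC : _root_.IsVertexCover G C) : tau G ≤ C.ncard :=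
  Nat.sInf_le ⟨C, hC, rfl⟩

theorem tauc_le_ncard (hC : IsConnectedVertexCover G C) : tauc G ≤ C.ncard :=
  Nat.sInf_le ⟨C, hC, rfl⟩

theorem exists_isVertexCover_ncard_eq_tau (G : SimpleGraph V) :
    ∃ C, _root_.IsVertexCover G C ∧ C.ncard = tau G :=
  Nat.sInf_mem (s := {n | ∃ C, _root_.IsVertexCover G C ∧ C.ncard = n})
    ⟨_, Set.univ, isVertexCover_univ, rfl⟩

theorem tau_pos [Finite V] (hG : G.edgeSet.Nonempty) : 0 < tau G := by
  obtain ⟨C, hC, hCτ⟩ := exists_isVertexCover_ncard_eq_tau G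
  exact hCτ ▸ (Set.ncard_pos C.toFinite).2 ((isVertexCover_iff.1 hC).nonempty hG)

theorem tau_le_tauc (hG : G.Connected) : tau G ≤ tauc G := by
  obtain ⟨C, ⟨hC, -⟩, hCτ⟩ : ∃ C, IsConnectedVertexCover G C ∧ C.ncard = tauc G :=
    Nat.sInf_mem (s := {n | ∃ C, IsConnectedVertexCover G C ∧ C.ncard = n})
      ⟨_, Set.univ, ⟨isVertexCover_univ, (induceUnivIso G).connected_iff.2 hG⟩, rfl⟩
  exact hCτ ▸ tau_le_ncard hC

theorem tauc_le_two_mul_tau_sub_one [Finite V] (hG : G.Connected) (hE : G.edgeSet.Nonempty) :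
    tauc G ≤ 2 * tau G - 1 := by
  obtain ⟨C, hC, hCτ⟩ := exists_isVertexCover_ncard_eq_tau G
  obtain ⟨D, -, hD, hDconn, hDcard⟩ :=
    (isVertexCover_iff.1 hC).exists_connected_superset hG.preconnected
      ((isVertexCover_iff.1 hC).nonempty hE)
  have hcomp : Nat.card (G.induce C).ConnectedComponent ≤ C.ncard :=
    Nat.card_coe_set_eq C ▸ card_connectedComponent_le_card
  have := tauc_le_ncard ⟨hD, hDconn⟩
  have := tau_pos hE
  omega

end CoverNumbers

/-- For every finite connected simple graph `G` with at least one edge,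
`τ(G) ≤ τ_c(G) ≤ 2τ(G) - 1`; in particular `1 ≤ τ_c(G)/τ(G) < 2`. -/
theorem poc_bounds {V : Type} [Fintype V] (G : SimpleGraph V)
    (hconn : G.Connected) (hedge : G.edgeSet.Nonempty) :
    tau G ≤ tauc G ∧ tauc G ≤ 2 * tau G - 1 ∧
      1 ≤ (tauc G : ℚ) / (tau G : ℚ) ∧ (tauc G : ℚ) / (tau G : ℚ) < 2 := by
  have hpos := tau_pos hedge
  have hlower := tau_le_tauc hconn
  have hupper := tauc_le_two_mul_tau_sub_one hconn hedge
  have hpos' : (0 : ℚ) < tau G := by exact_mod_cast hpos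
  refine ⟨hlower, hupper, ?_, ?_⟩
  · rw [one_le_div hpos']
    exact_mod_cast hlower
  · rw [div_lt_iff₀ hpos']
    exact_mod_cast (by omega : tauc G < 2 * tau G)
end

section
/- Let G be a finite connected simple graph and let C be a vertex cover of G. If (𝒜, ℬ) is a bipartition of the set of connected components of the subgraph induced by C with 𝒜 ≠ ∅ and ℬ ≠ ∅, then there exist a component A ∈ 𝒜 and a component B ∈ ℬ such that the distance in G between the vertex set of A and the vertex set of B is exactly 2 (the distance between two vertex sets being the minimum over all pairs of the graph distance). -/
open SimpleGraph

namespace SimpleGraph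

variable {V : Type} {G : SimpleGraph V} {C : Set V}

theorem two_le_dist_of_connectedComponentMk_ne {x y : C} (hxy : G.Reachable x y)
    (hne : (G.induce C).connectedComponentMk x ≠ (G.induce C).connectedComponentMk y) :
    2 ≤ G.dist x y :=
  hxy.one_lt_dist_of_ne_of_not_adj (fun h ↦ hne (congrArg _ (Subtype.ext h)))
    (fun h ↦ hne (ConnectedComponent.sound (show (G.induce C).Adj x y from h).reachable))

/-- Apply the boundary-dart argument to the closed neighbourhood of the vertices whose
component lies in `S`: an edge leaving it must leave from a vertex outside the cover `C`,
so it enters `C` in a component outside `S`. -/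
theorem _root_.IsVertexCover.exists_adj_adj_of_connectedComponentMk_mem
    (hC : _root_.IsVertexCover G C) (S : Set (G.induce C).ConnectedComponent) {a b : C}
    (ha : (G.induce C).connectedComponentMk a ∈ S) (hb : (G.induce C).connectedComponentMk b ∉ S)
    (hab : G.Reachable a b) :
    ∃ x y : C, (G.induce C).connectedComponentMk x ∈ S ∧
      (G.induce C).connectedComponentMk y ∉ S ∧ ∃ v, G.Adj x v ∧ G.Adj v y := by
  set N : Set V := {v | ∃ x : C, (G.induce C).connectedComponentMk x ∈ S ∧ (x = v ∨ G.Adj x v)}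
  have mem_N_of_mem {x : V} (hx : x ∈ C) (hxN : x ∈ N) :
      (G.induce C).connectedComponentMk ⟨x, hx⟩ ∈ S := by
    obtain ⟨z, hz, rfl | hzx⟩ := hxN
    · exact hz
    · rwa [ConnectedComponent.sound (show (G.induce C).Adj z ⟨x, hx⟩ from hzx).reachable] at hz
  obtain ⟨p⟩ := hab
  obtain ⟨⟨⟨u, w⟩, huw⟩, -, huN, hwN⟩ :=
    p.exists_boundary_dart N ⟨a, ha, Or.inl rfl⟩ fun hbN ↦ hb (mem_N_of_mem b.2 hbN)
  obtain ⟨x, hx, rfl | hxu⟩ := huN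
  · exact absurd ⟨x, hx, Or.inr huw⟩ hwN
  have huC : u ∉ C := fun huC ↦ hwN ⟨⟨u, huC⟩, mem_N_of_mem huC ⟨x, hx, Or.inr hxu⟩, Or.inr huw⟩
  have hwC : w ∈ C := (hC huw).resolve_left huC
  exact ⟨x, ⟨w, hwC⟩, hx, fun hw ↦ hwN ⟨_, hw, Or.inl rfl⟩, u, hxu, huw⟩

theorem sInf_dist_supp_eq_two (hconn : G.Connected) {A B : (G.induce C).ConnectedComponent}
    (hAB : A ≠ B) {x y : C} (hx : x ∈ A.supp) (hy : y ∈ B.supp) (hxy : G.dist x y ≤ 2) :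
    sInf {d : ℕ | ∃ a ∈ Subtype.val '' A.supp, ∃ b ∈ Subtype.val '' B.supp,
      d = G.dist a b} = 2 := by
  have two_le : ∀ a ∈ A.supp, ∀ b ∈ B.supp, 2 ≤ G.dist (a : V) b := by
    intro a ha b hb
    refine two_le_dist_of_connectedComponentMk_ne (hconn a b) ?_
    rwa [(ConnectedComponent.mem_supp_iff _ _).mp ha, (ConnectedComponent.mem_supp_iff _ _).mp hb]
  have hmem : G.dist (x : V) y ∈ {d : ℕ | ∃ a ∈ Subtype.val '' A.supp,
      ∃ b ∈ Subtype.val '' B.supp, d = G.dist a b} := ⟨x, ⟨x, hx, rfl⟩, y, ⟨y, hy, rfl⟩, rfl⟩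
  refine le_antisymm ((Nat.sInf_le hmem).trans hxy) (le_csInf ⟨_, hmem⟩ ?_)
  rintro d ⟨-, ⟨a, ha, rfl⟩, -, ⟨b, hb, rfl⟩, rfl⟩
  exact two_le a ha b hb

end SimpleGraph

theorem components_at_distance_two_general {V : Type} (G : SimpleGraph V)
    (hconn : G.Connected) (C : Set V) (hC : _root_.IsVertexCover G C)
    (𝒜 ℬ : Set ((G.induce C).ConnectedComponent))
    (hunion : 𝒜 ∪ ℬ = Set.univ) (hdisj : 𝒜 ∩ ℬ = ∅)
    (hA : 𝒜.Nonempty) (hB : ℬ.Nonempty) :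
    ∃ A ∈ 𝒜, ∃ B ∈ ℬ,
      sInf {d : ℕ | ∃ a ∈ Subtype.val '' A.supp, ∃ b ∈ Subtype.val '' B.supp,
        d = G.dist a b} = 2 := by
  obtain ⟨⟨a⟩, ha⟩ := hA
  obtain ⟨⟨b⟩, hb⟩ := hB
  have hb𝒜 : (G.induce C).connectedComponentMk b ∉ 𝒜 := fun hb𝒜 ↦
    (hdisj ▸ Set.mem_inter hb𝒜 hb : _ ∈ (∅ : Set _))
  obtain ⟨x, y, hx, hy, v, hxv, hvy⟩ :=
    hC.exists_adj_adj_of_connectedComponentMk_mem 𝒜 ha hb𝒜 (hconn a b)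
  have hyℬ : (G.induce C).connectedComponentMk y ∈ ℬ :=
    ((Set.eq_univ_iff_forall.mp hunion) _).resolve_left hy
  refine ⟨_, hx, _, hyℬ, sInf_dist_supp_eq_two hconn (fun h ↦ hy (h ▸ hx)) rfl rfl ?_⟩
  simpa using dist_le (hxv.toWalk.concat hvy)

/-- If `(𝒜, ℬ)` is a bipartition of the connected components of the subgraph of `G`
induced by a vertex cover `C`, with both parts nonempty, then some component in `𝒜`
and some component in `ℬ` are at distance exactly `2` in `G` (distance between
vertex sets being the minimum of the pairwise graph distances). -/
theorem components_at_distance_two {V : Type} [Fintype V] (G : SimpleGraph V)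
    (hconn : G.Connected) (C : Set V) (hC : _root_.IsVertexCover G C)
    (𝒜 ℬ : Set ((G.induce C).ConnectedComponent))
    (hunion : 𝒜 ∪ ℬ = Set.univ) (hdisj : 𝒜 ∩ ℬ = ∅)
    (hA : 𝒜.Nonempty) (hB : ℬ.Nonempty) :
    ∃ A ∈ 𝒜, ∃ B ∈ ℬ,
      sInf {d : ℕ | ∃ a ∈ Subtype.val '' A.supp, ∃ b ∈ Subtype.val '' B.supp,
        d = G.dist a b} = 2 :=
  components_at_distance_two_general G hconn C hC 𝒜 ℬ hunion hdisj hA hB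
end

section
/- Let G be a finite connected simple graph that contains no induced subgraph isomorphic to C_6, P_7, Δ_1, or Δ_2, let C be a vertex cover of G such that the subgraph induced by C has exactly three connected components, and suppose G contains an induced cycle of length 7 that intersects all three of these components. Then there exists a connected vertex cover C_c of G with |C_c| ≤ |C| + 1 if |C| > 4, and with |C_c| = 6 if |C| = 4. -/
open SimpleGraph

/-- `G` is `H`-free: `G` has no induced subgraph isomorphic to `H`
(equivalently, there is no graph embedding of `H` into `G`). -/
def HFree {W V : Type} (H : SimpleGraph W) (G : SimpleGraph V) : Prop :=
  IsEmpty (H ↪g G)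

/-- `Δ₁`: two 4-cycles `0-1-3-2-0` and `3-4-5-6-3` sharing exactly the vertex `3`. -/
def Delta1 : SimpleGraph (Fin 7) :=
  SimpleGraph.fromEdgeSet {s(0,1), s(0,2), s(1,3), s(2,3), s(3,4), s(4,5), s(5,6), s(6,3)}

/-- `Δ₂`: `Δ₁` with the edge `{1,3}` (an edge incident to the degree-4 vertex `3`) removed. -/
def Delta2 : SimpleGraph (Fin 7) :=
  SimpleGraph.fromEdgeSet {s(0,1), s(0,2), s(2,3), s(3,4), s(4,5), s(5,6), s(6,3)}

/-!
Rotate the induced 7-cycle `v` so that its vertices outside the cover `C` (an independent set)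
are `v 2, v 4, v 6`: any other independent set leaves at most two arcs of the cycle in `C`, and
these cannot meet three components of `G[C]`. Then `v 0 v 1`, `v 3`, `v 5` lie in the three
components, and adding `v 2, v 4` always gives a connected cover with `|C| + 2` vertices.

To save a vertex when `|C| ≥ 5`: a vertex adjacent to all three components is added alone.
Otherwise every neighbour of `v 5` in its component also sees `v 4` and `v 6`, so if that
component is not `{v 5}`, `v 5` can be traded for `v 4, v 6`; symmetrically for `v 3`. If both
components are singletons, every vertex of the component of `v 0` is `v 0`, `v 1` or adjacent to
one of them, and a further vertex `u` of it sees `v 2` or `v 6`, so `u` can be traded for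
`v 2, v 4` or `v 4, v 6`.

Each forbidden subgraph is used through the set of positions on the cycle adjacent to one
vertex `x`: the subgraph induced by the cycle and `x` is a cone over `C₇`, and the induced
`P₇`, `C₆` and `Δ₂` it contains are found by a finite check.
-/

set_option maxRecDepth 10000

instance (n : ℕ) : DecidableRel (pathGraph n).Adj := fun _ _ => decidable_of_iff' _ pathGraph_adj

instance : DecidableRel Delta2.Adj := fun _ _ => by
  unfold Delta2; simp only [fromEdgeSet_adj]; infer_instance

/-- A map reflecting adjacency identifies only twins of `H`; if it keeps those apart, it is an
induced copy of `H`. -/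
theorem HFree.comap_ne {W V : Type} {H : SimpleGraph W} {G : SimpleGraph V} (hH : HFree H G)
    (f : W → V) (htwin : ∀ a b, (∀ c, H.Adj a c ↔ H.Adj b c) → f a = f b → a = b) :
    G.comap f ≠ H := by
  rintro rfl
  refine hH.false ⟨⟨f, fun a b hab => htwin a b (fun c => ?_) hab⟩, Iff.rfl⟩
  simp only [comap_adj, hab]

namespace SimpleGraph

variable {α V : Type*}

/-- `H` with a new vertex `none` joined to the vertices of `s`. -/
def cone (H : SimpleGraph α) (s : Set α) : SimpleGraph (Option α) where
  Adj
    | some a, some b => H.Adj a b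
    | none, some b => b ∈ s
    | some a, none => a ∈ s
    | none, none => False
  symm := ⟨by rintro (_ | a) (_ | b) h <;> first | exact h | exact h.symm⟩
  loopless := ⟨by rintro (_ | a) h <;> first | exact h | exact H.loopless.irrefl a h⟩

instance (H : SimpleGraph α) (s : Set α) [DecidableRel H.Adj] [DecidablePred (· ∈ s)] :
    DecidableRel (H.cone s).Adj
  | some _, some _ => inferInstanceAs (Decidable (H.Adj _ _))
  | none, some b => inferInstanceAs (Decidable (b ∈ s))
  | some a, none => inferInstanceAs (Decidable (a ∈ s))
  | none, none => inferInstanceAs (Decidable False)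

theorem comap_optionElim (G : SimpleGraph V) (f : α → V) (x : V) :
    G.comap (fun p => p.elim x f) = (G.comap f).cone {a | G.Adj x (f a)} := by
  ext (_ | a) (_ | b)
  · simp [cone]
  · rfl
  · exact G.adj_comm _ _
  · rfl

end SimpleGraph

namespace SimpleGraph

variable {V : Type*} {G : SimpleGraph V} {s t : Set V} {a b c z : V}

def ReachIn (G : SimpleGraph V) (s : Set V) (a b : V) : Prop :=
  ∃ p : G.Walk a b, ∀ x ∈ p.support, x ∈ s

namespace ReachIn

theorem left_mem (h : G.ReachIn s a b) : a ∈ s :=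
  h.elim fun p hp => hp a p.start_mem_support

theorem right_mem (h : G.ReachIn s a b) : b ∈ s :=
  h.elim fun p hp => hp b p.end_mem_support

theorem refl (ha : a ∈ s) : G.ReachIn s a a :=
  ⟨.nil, by simpa using ha⟩

theorem of_adj (ha : a ∈ s) (hb : b ∈ s) (hab : G.Adj a b) : G.ReachIn s a b :=
  ⟨.cons hab .nil, by simp [ha, hb]⟩

theorem symm (h : G.ReachIn s a b) : G.ReachIn s b a :=
  h.elim fun p hp => ⟨p.reverse, by simpa using hp⟩

theorem trans (h : G.ReachIn s a b) (h' : G.ReachIn s b c) : G.ReachIn s a c :=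
  h.elim fun p hp => h'.elim fun q hq =>
    ⟨p.append q, by simpa [Walk.mem_support_append_iff] using fun x hx => hx.elim (hp x) (hq x)⟩

theorem mono (h : G.ReachIn s a b) (hst : s ⊆ t) : G.ReachIn t a b :=
  h.elim fun p hp => ⟨p, fun x hx => hst (hp x hx)⟩

theorem trans_adj (h : G.ReachIn s a b) (hc : c ∈ s) (hbc : G.Adj b c) : G.ReachIn s a c :=
  h.trans (of_adj h.right_mem hc hbc)

theorem diff_singleton (h : G.ReachIn s a b) (hz : ¬G.ReachIn s a z) :
    G.ReachIn (s \ {z}) a b := by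
  classical
  obtain ⟨p, hp⟩ := h
  refine ⟨p, fun x hx => ⟨hp x hx, fun hxz => hz ?_⟩⟩
  rw [Set.mem_singleton_iff.mp hxz] at hx
  exact ⟨p.takeUntil z hx, fun y hy => hp y (p.support_takeUntil_subset_support hx hy)⟩

theorem exists_adj_diff_singleton (h : G.ReachIn s a z) (haz : a ≠ z) :
    ∃ w, G.Adj w z ∧ G.ReachIn (s \ {z}) a w := by
  obtain ⟨p, hp⟩ := h
  induction p with
  | nil => exact absurd rfl haz
  | @cons a b z hab q ih =>
    have ha : a ∈ s \ {z} := ⟨hp a (by simp), haz⟩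
    by_cases hbz : b = z
    · exact ⟨a, hbz ▸ hab, refl ha⟩
    · obtain ⟨w, hwz, hbw⟩ := ih hbz fun x hx => hp x (by simp [hx])
      exact ⟨w, hwz, (of_adj ha hbw.left_mem hab).trans hbw⟩

theorem induction_on {P : V → Prop} (h : G.ReachIn s a b) (hb : P b)
    (step : ∀ x y, x ∈ s → y ∈ s → G.Adj x y → P y → P x) : P a := by
  obtain ⟨p, hp⟩ := h
  induction p with
  | nil => exact hb
  | cons hxy q ih =>
    exact step _ _ (hp _ (by simp)) (hp _ (by simp)) hxy (ih hb fun x hx => hp x (by simp [hx]))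

theorem iff_reachable_induce (ha : a ∈ s) (hb : b ∈ s) :
    G.ReachIn s a b ↔ (G.induce s).Reachable ⟨a, ha⟩ ⟨b, hb⟩ := by
  constructor
  · rintro ⟨p, hp⟩
    exact ⟨p.induce s hp⟩
  · rintro ⟨p⟩
    refine ⟨p.map (Embedding.induce s).toHom, fun x hx => ?_⟩
    obtain ⟨y, -, rfl⟩ := List.mem_map.mp ((Walk.support_map _ p) ▸ hx)
    exact y.2

theorem iff_connectedComponentMk_eq (ha : a ∈ s) (hb : b ∈ s) :
    G.ReachIn s a b ↔ (G.induce s).connectedComponentMk ⟨a, ha⟩ =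
      (G.induce s).connectedComponentMk ⟨b, hb⟩ :=
  (iff_reachable_induce ha hb).trans ConnectedComponent.eq.symm

theorem not_adj {x y : V} (ha : G.ReachIn s a x) (hb : G.ReachIn s b y)
    (hxy : ¬G.ReachIn s x y) : ¬G.Adj a b := fun hab =>
  hxy ((ha.symm.trans (of_adj ha.left_mem hb.left_mem hab)).trans hb)

theorem pigeonhole {x y : V} (ha : G.ReachIn s a x ∨ G.ReachIn s a y)
    (hb : G.ReachIn s b x ∨ G.ReachIn s b y) (hc : G.ReachIn s c x ∨ G.ReachIn s c y) :
    G.ReachIn s a b ∨ G.ReachIn s a c ∨ G.ReachIn s b c := by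
  rcases ha with ha | ha <;> rcases hb with hb | hb <;> rcases hc with hc | hc <;>
    first
    | exact .inl (ha.trans hb.symm)
    | exact .inr (.inl (ha.trans hc.symm))
    | exact .inr (.inr (hb.trans hc.symm))

end ReachIn

theorem induce_connected_of_reachIn {u : V} (hu : u ∈ s) (h : ∀ a ∈ s, G.ReachIn s a u) :
    (G.induce s).Connected :=
  (connected_iff_exists_forall_reachable _).mpr
    ⟨⟨u, hu⟩, fun a => ((ReachIn.iff_reachable_induce a.2 hu).mp (h a a.2)).symm⟩

end SimpleGraph

section VertexCover

variable {V : Type} {G : SimpleGraph V} {C : Set V} {a b c : V}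

theorem IsVertexCover.not_adj (hC : _root_.IsVertexCover G C) (ha : a ∉ C) (hb : b ∉ C) :
    ¬G.Adj a b := fun hab => (hC hab).elim ha hb

theorem IsVertexCover.subset {D : Set V} (hC : _root_.IsVertexCover G C) (hCD : C ⊆ D) :
    _root_.IsVertexCover G D := fun _ _ hab => (hC hab).imp (@hCD _) (@hCD _)

theorem IsVertexCover.insert_insert_diff (hC : _root_.IsVertexCover G C)
    (h : ∀ y, G.Adj c y → y ∉ C → y = a ∨ y = b) :
    _root_.IsVertexCover G (insert a (insert b (C \ {c}))) := by
  have key : ∀ x y, G.Adj x y → x ∈ C → x ∈ insert a (insert b (C \ {c})) ∨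
      y ∈ insert a (insert b (C \ {c})) := by
    intro x y hxy hx
    by_cases hxc : x = c
    · subst hxc
      by_cases hy : y ∈ C
      · exact .inr (.inr (.inr ⟨hy, hxy.ne'⟩))
      · rcases h y hxy hy with rfl | rfl <;> simp
    · exact .inl (.inr (.inr ⟨hx, hxc⟩))
  intro x y hxy
  exact (hC hxy).elim (key x y hxy) fun hy => (key y x hxy.symm hy).symm

theorem ncard_insert_insert_diff_le (hc : c ∈ C) (hC : C.Finite) :
    (insert a (insert b (C \ {c}))).ncard ≤ C.ncard + 1 := by
  have := Set.ncard_sdiff_singleton_add_one hc hC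
  have := Set.ncard_insert_le a (insert b (C \ {c}))
  have := Set.ncard_insert_le b (C \ {c})
  omega

end VertexCover

section CycleNeighbourhood

variable {V : Type*} {G : SimpleGraph V} (v : cycleGraph 7 ↪g G)

open Classical in
noncomputable def cycleNbhd (x : V) : Finset (Fin 7) := {i | G.Adj x (v i)}

theorem mem_cycleNbhd {x : V} {i : Fin 7} : i ∈ cycleNbhd v x ↔ G.Adj x (v i) := by
  simp [cycleNbhd]

theorem cycleNbhd_eq_empty_iff {x : V} : cycleNbhd v x = ∅ ↔ ∀ i, ¬G.Adj x (v i) := by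
  simp [Finset.eq_empty_iff_forall_notMem, mem_cycleNbhd]

theorem comap_optionElim_cycle (x : V) :
    G.comap (fun p => p.elim x v) = (cycleGraph 7).cone ↑(cycleNbhd v x) := by
  rw [comap_optionElim]
  congr 1
  · ext a b; exact v.map_adj_iff
  · ext i; exact (mem_cycleNbhd v).symm

end CycleNeighbourhood

def GapAfter (S : Finset (Fin 7)) (i : Fin 7) (k : ℕ) : Prop :=
  i ∈ S ∧ ∀ m : Fin 7, 1 ≤ m.val → m.val ≤ k → i + m ∉ S

instance (S : Finset (Fin 7)) (i : Fin 7) (k : ℕ) : Decidable (GapAfter S i k) := by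
  unfold GapAfter; infer_instance

theorem comap_cone_eq_pathGraph {S : Finset (Fin 7)} {i : Fin 7} (h : GapAfter S i 5) :
    ((cycleGraph 7).cone ↑S).comap
      ![none, some i, some (i + 1), some (i + 2), some (i + 3), some (i + 4), some (i + 5)] =
      pathGraph 7 := by
  ext a b
  revert i S h a b
  decide

theorem comap_cone_eq_cycleGraph_six {S : Finset (Fin 7)} {i : Fin 7} (h : GapAfter S i 3)
    (h4 : i + 4 ∈ S) :
    ((cycleGraph 7).cone ↑S).comap
      ![none, some i, some (i + 1), some (i + 2), some (i + 3), some (i + 4)] = cycleGraph 6 := by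
  ext a b
  revert i S h h4 a b
  decide

theorem comap_cone_eq_delta2 (i : Fin 7) :
    ((cycleGraph 7).cone ↑({i - 1, i + 1} : Finset (Fin 7))).comap
      ![some (i - 3), some (i + 3), some (i - 2), some (i - 1), some i, some (i + 1), none] =
      Delta2 := by
  ext a b
  revert i a b
  decide

theorem comap_cone_cone_eq_pathGraph {S : Finset (Fin 7)} {i : Fin 7} (h : GapAfter S i 4) :
    (((cycleGraph 7).cone ↑S).cone {none}).comap
      ![none, some none, some (some i), some (some (i + 1)), some (some (i + 2)),
        some (some (i + 3)), some (some (i + 4))] = pathGraph 7 := by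
  ext a b
  revert i S h a b
  decide

theorem pathGraph_seven_twinFree :
    ∀ a b : Fin 7, (∀ c, (pathGraph 7).Adj a c ↔ (pathGraph 7).Adj b c) → a = b := by decide

theorem cycleGraph_six_twinFree :
    ∀ a b : Fin 6, (∀ c, (cycleGraph 6).Adj a c ↔ (cycleGraph 6).Adj b c) → a = b := by decide

theorem delta2_twins : ∀ a b : Fin 7, (∀ c, Delta2.Adj a c ↔ Delta2.Adj b c) →
    a = b ∨ (a = 4 ∧ b = 6) ∨ (a = 6 ∧ b = 4) := by decide

section ForbiddenNeighbourhoods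

variable {V : Type} {G : SimpleGraph V} (v : cycleGraph 7 ↪g G)

theorem not_gapAfter_five (hP7 : HFree (pathGraph 7) G) (x : V) (i : Fin 7) :
    ¬GapAfter (cycleNbhd v x) i 5 := fun h =>
  hP7.comap_ne _ (fun a b hab _ => pathGraph_seven_twinFree a b hab) <| by
    rw [← comap_comap, comap_optionElim_cycle]; exact comap_cone_eq_pathGraph h

theorem not_gapAfter_three_of_mem (hC6 : HFree (cycleGraph 6) G) (x : V) (i : Fin 7)
    (h4 : i + 4 ∈ cycleNbhd v x) : ¬GapAfter (cycleNbhd v x) i 3 := fun h =>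
  hC6.comap_ne _ (fun a b hab _ => cycleGraph_six_twinFree a b hab) <| by
    rw [← comap_comap, comap_optionElim_cycle]; exact comap_cone_eq_cycleGraph_six h h4

/-- Otherwise `x` and `v i` are the twins `4, 6` of an induced `Δ₂`. -/
theorem eq_of_cycleNbhd_eq (hΔ2 : HFree Delta2 G) {x : V} {i : Fin 7}
    (h : cycleNbhd v x = {i - 1, i + 1}) : x = v i := by
  by_contra hx
  refine hΔ2.comap_ne ((fun p => p.elim x v) ∘
    ![some (i - 3), some (i + 3), some (i - 2), some (i - 1), some i, some (i + 1), none])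
    (fun a b hab hf => ?_) ?_
  · rcases delta2_twins a b hab with rfl | ⟨rfl, rfl⟩ | ⟨rfl, rfl⟩
    · rfl
    · exact absurd hf.symm hx
    · exact absurd hf hx
  · rw [← comap_comap, comap_optionElim_cycle, h]; exact comap_cone_eq_delta2 i

theorem not_gapAfter_four_of_adj (hP7 : HFree (pathGraph 7) G) {x y : V} (hxy : G.Adj x y)
    (hx : cycleNbhd v x = ∅) (i : Fin 7) : ¬GapAfter (cycleNbhd v y) i 4 := fun h =>
  hP7.comap_ne ((fun p : Option (Option (Fin 7)) => p.elim x fun q => q.elim y v) ∘ _)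
    (fun a b hab _ => pathGraph_seven_twinFree a b hab) <| by
    have hnone : {q : Option (Fin 7) | G.Adj x (q.elim y v)} = {none} := by
      ext (_ | j)
      · simp [hxy]
      · simp [← mem_cycleNbhd v, hx]
    rw [← comap_comap, comap_optionElim, hnone, comap_optionElim_cycle]
    exact comap_cone_cone_eq_pathGraph h

end ForbiddenNeighbourhoods

def ArcAvoids (T : Finset (Fin 7)) (i j : Fin 7) : Prop := ∀ m : Fin 7, m ≤ j - i → i + m ∉ T

instance (T : Finset (Fin 7)) (i j : Fin 7) : Decidable (ArcAvoids T i j) := by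
  unfold ArcAvoids; infer_instance

theorem independent_eq_rotation_or_arcAvoids : ∀ T : Finset (Fin 7),
    (∀ i ∈ T, ∀ j ∈ T, ¬(cycleGraph 7).Adj i j) →
    (∃ r, ∀ i, i ∈ T ↔ i - r = 2 ∨ i - r = 4 ∨ i - r = 6) ∨
      ∃ p q, ∀ i ∉ T, ArcAvoids T i p ∨ ArcAvoids T i q := by
  decide

section Normalization

variable {V : Type} {G : SimpleGraph V} {C : Set V} (f : cycleGraph 7 ↪g G)

theorem reachIn_of_arcAvoids {T : Finset (Fin 7)} (hT : ∀ k ∉ T, f k ∈ C) {i j : Fin 7}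
    (h : ArcAvoids T i j) : G.ReachIn C (f i) (f j) := by
  have hmem : ∀ m, m ≤ j - i → f (i + m) ∈ C := fun m hm => hT _ (h m hm)
  have key : ∀ (n : ℕ) (hn : n < 7), ⟨n, hn⟩ ≤ j - i → G.ReachIn C (f i) (f (i + ⟨n, hn⟩)) := by
    intro n
    induction n with
    | zero => exact fun hn h0 => by simpa using ReachIn.refl (by simpa using hmem _ h0)
    | succ n ih =>
      intro hn hle
      have hstep : i + ⟨n + 1, hn⟩ = i + ⟨n, by omega⟩ + 1 := by
        ext; simp only [Fin.val_add]; omega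
      rw [hstep]
      refine (ih (by omega) (le_trans (Fin.mk_le_mk.mpr (by omega)) hle)).trans_adj
        (hstep ▸ hmem _ hle) (f.map_adj_iff.mpr ?_)
      simp [cycleGraph_adj]
  simpa using key _ (j - i).isLt le_rfl

theorem exists_connectedComponentMk_eq
    (hmeet : ∀ K : (G.induce C).ConnectedComponent, ∃ i : Fin 7, f i ∈ Subtype.val '' K.supp)
    (K : (G.induce C).ConnectedComponent) :
    ∃ i, ∃ hi : f i ∈ C, (G.induce C).connectedComponentMk ⟨f i, hi⟩ = K := by
  obtain ⟨i, x, hx, hxi⟩ := hmeet K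
  refine ⟨i, hxi ▸ x.2, ?_⟩
  rw [← (ConnectedComponent.mem_supp_iff K x).mp hx]
  exact congrArg _ (Subtype.ext hxi.symm)

theorem exists_reachIn_of_mem
    (hmeet : ∀ K : (G.induce C).ConnectedComponent, ∃ i : Fin 7, f i ∈ Subtype.val '' K.supp)
    {x : V} (hx : x ∈ C) : ∃ i, G.ReachIn C x (f i) := by
  obtain ⟨i, hi, hK⟩ := exists_connectedComponentMk_eq f hmeet
    ((G.induce C).connectedComponentMk ⟨x, hx⟩)
  exact ⟨i, (ReachIn.iff_connectedComponentMk_eq hx hi).mpr hK.symm⟩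

theorem not_forall_reachIn_or_reachIn (h3 : Nat.card (G.induce C).ConnectedComponent = 3)
    (hmeet : ∀ K : (G.induce C).ConnectedComponent, ∃ i : Fin 7, f i ∈ Subtype.val '' K.supp)
    (x y : V) : ¬∀ i, f i ∈ C → G.ReachIn C (f i) x ∨ G.ReachIn C (f i) y := by
  classical
  intro h
  have : Finite (G.induce C).ConnectedComponent := Nat.finite_of_card_ne_zero (by omega)
  have : Fintype (G.induce C).ConnectedComponent := Fintype.ofFinite _
  have hcard : (Finset.univ : Finset (G.induce C).ConnectedComponent).card = 3 := by
    rw [Finset.card_univ, ← Nat.card_eq_fintype_card, h3]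
  obtain ⟨K₁, K₂, K₃, h₁₂, h₁₃, h₂₃, -⟩ := Finset.card_eq_three.mp hcard
  obtain ⟨a, ha, rfl⟩ := exists_connectedComponentMk_eq f hmeet K₁
  obtain ⟨b, hb, rfl⟩ := exists_connectedComponentMk_eq f hmeet K₂
  obtain ⟨c, hc, rfl⟩ := exists_connectedComponentMk_eq f hmeet K₃
  rcases ReachIn.pigeonhole (h a ha) (h b hb) (h c hc) with h' | h' | h'
  · exact h₁₂ ((ReachIn.iff_connectedComponentMk_eq ha hb).mp h')
  · exact h₁₃ ((ReachIn.iff_connectedComponentMk_eq ha hc).mp h')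
  · exact h₂₃ ((ReachIn.iff_connectedComponentMk_eq hb hc).mp h')

theorem exists_rotation (hC : _root_.IsVertexCover G C)
    (hsplit : ∀ x y, ¬∀ i, f i ∈ C → G.ReachIn C (f i) x ∨ G.ReachIn C (f i) y) :
    ∃ r, ∀ i, f (i + r) ∈ C ↔ ¬(i = 2 ∨ i = 4 ∨ i = 6) := by
  classical
  set T : Finset (Fin 7) := {i | f i ∉ C}
  have hT : ∀ i, i ∈ T ↔ f i ∉ C := fun i => by simp [T]
  have hTC : ∀ i ∉ T, f i ∈ C := fun i hi => not_not.mp (mt (hT i).2 hi)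
  rcases independent_eq_rotation_or_arcAvoids T fun i hi j hj hij =>
    hC.not_adj ((hT i).1 hi) ((hT j).1 hj) (f.map_adj_iff.mpr hij) with ⟨r, hr⟩ | ⟨p, q, hpq⟩
  · exact ⟨r, fun i => by simpa [hT] using (hr (i + r)).not⟩
  · exact (hsplit (f p) (f q) fun i hi => (hpq i fun h => (hT i).1 h hi).imp
      (reachIn_of_arcAvoids f hTC) (reachIn_of_arcAvoids f hTC)).elim

end Normalization

def cycleReflect : cycleGraph 7 ↪g cycleGraph 7 :=
  ⟨⟨fun i => 1 - i, by decide⟩, fun {a b} => by revert a b; decide⟩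

def cycleRotate (r : Fin 7) : cycleGraph 7 ↪g cycleGraph 7 :=
  ⟨⟨fun i => i + r, add_left_injective r⟩, by simp [cycleGraph_adj]⟩

/-- The induced `C₇` after rotation, with the three components of `G[C]` represented by
`v 0`, `v 3`, `v 5`. -/
structure SevenCycleConfig {V : Type} (G : SimpleGraph V) (C : Set V) where
  v : cycleGraph 7 ↪g G
  isVertexCover : _root_.IsVertexCover G C
  zero_mem : v 0 ∈ C
  one_mem : v 1 ∈ C
  three_mem : v 3 ∈ C
  five_mem : v 5 ∈ C
  two_not_mem : v 2 ∉ C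
  four_not_mem : v 4 ∉ C
  six_not_mem : v 6 ∉ C
  reachIn_cases : ∀ a ∈ C, G.ReachIn C a (v 0) ∨ G.ReachIn C a (v 3) ∨ G.ReachIn C a (v 5)
  not_reachIn_zero_three : ¬G.ReachIn C (v 0) (v 3)
  not_reachIn_zero_five : ¬G.ReachIn C (v 0) (v 5)
  not_reachIn_three_five : ¬G.ReachIn C (v 3) (v 5)

namespace SevenCycleConfig

variable {V : Type} {G : SimpleGraph V} {C : Set V}

theorem nonempty (hC : _root_.IsVertexCover G C)
    (h3 : Nat.card (G.induce C).ConnectedComponent = 3) (f : cycleGraph 7 ↪g G)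
    (hmeet : ∀ K : (G.induce C).ConnectedComponent, ∃ i : Fin 7, f i ∈ Subtype.val '' K.supp) :
    Nonempty (SevenCycleConfig G C) := by
  have hsplit := not_forall_reachIn_or_reachIn f h3 hmeet
  obtain ⟨r, hv⟩ := exists_rotation f hC hsplit
  set v : cycleGraph 7 ↪g G := (cycleRotate r).trans f
  have hrep : ∀ i, f i ∈ C →
      G.ReachIn C (f i) (v 0) ∨ G.ReachIn C (f i) (v 3) ∨ G.ReachIn C (f i) (v 5) := by
    have key : ∀ j : Fin 7, ¬(j = 2 ∨ j = 4 ∨ j = 6) → j = 0 ∨ j = 1 ∨ j = 3 ∨ j = 5 := by decide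
    intro i hi
    rw [show f i = v (i - r) by simp [v, cycleRotate]] at hi ⊢
    rcases key _ ((hv _).1 hi) with h | h | h | h <;> rw [h] at hi ⊢
    · exact .inl (.refl hi)
    · exact .inl (.of_adj hi ((hv 0).2 (by decide)) (v.map_adj_iff.mpr (by decide)))
    · exact .inr (.inl (.refl hi))
    · exact .inr (.inr (.refl hi))
  have hsep : ∀ {x y z : V}, (∀ i, f i ∈ C →
      G.ReachIn C (f i) x ∨ G.ReachIn C (f i) y ∨ G.ReachIn C (f i) z) → ¬G.ReachIn C x y :=
    fun h hxy => hsplit _ _ fun i hi => (h i hi).elim .inl (Or.imp_left (·.trans hxy.symm))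
  exact ⟨{
    v := v
    isVertexCover := hC
    zero_mem := (hv 0).2 (by decide)
    one_mem := (hv 1).2 (by decide)
    three_mem := (hv 3).2 (by decide)
    five_mem := (hv 5).2 (by decide)
    two_not_mem := fun h => (hv 2).1 h (by decide)
    four_not_mem := fun h => (hv 4).1 h (by decide)
    six_not_mem := fun h => (hv 6).1 h (by decide)
    reachIn_cases := fun x hx => by
      obtain ⟨i, hi⟩ := exists_reachIn_of_mem f hmeet hx
      exact (hrep i hi.right_mem).imp hi.trans (Or.imp hi.trans hi.trans)
    not_reachIn_zero_three := hsep hrep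
    not_reachIn_zero_five := hsep fun i hi => (hrep i hi).imp_right Or.symm
    not_reachIn_three_five := hsep fun i hi => (hrep i hi).rotate }⟩

variable (K : SevenCycleConfig G C)

theorem adj {i j : Fin 7} (h : (cycleGraph 7).Adj i j) : G.Adj (K.v i) (K.v j) :=
  K.v.map_adj_iff.mpr h

theorem reachIn_one_zero : G.ReachIn C (K.v 1) (K.v 0) :=
  .of_adj K.one_mem K.zero_mem (K.adj (by decide))

/-- Reading the cycle backwards swaps the roles of `v 3` and `v 5`. -/
def reflect : SevenCycleConfig G C where
  v := cycleReflect.trans K.v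
  isVertexCover := K.isVertexCover
  zero_mem := K.one_mem
  one_mem := K.zero_mem
  three_mem := K.five_mem
  five_mem := K.three_mem
  two_not_mem := K.six_not_mem
  four_not_mem := K.four_not_mem
  six_not_mem := K.two_not_mem
  reachIn_cases a ha := by
    rcases K.reachIn_cases a ha with h | h | h
    · exact .inl (h.trans K.reachIn_one_zero.symm)
    · exact .inr (.inr h)
    · exact .inr (.inl h)
  not_reachIn_zero_three h := K.not_reachIn_zero_five (K.reachIn_one_zero.symm.trans h)
  not_reachIn_zero_five h := K.not_reachIn_zero_three (K.reachIn_one_zero.symm.trans h)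
  not_reachIn_three_five h := K.not_reachIn_three_five h.symm

theorem isConnectedVertexCover_insert_two_four :
    IsConnectedVertexCover G (insert (K.v 2) (insert (K.v 4) C)) := by
  have hsub : C ⊆ insert (K.v 2) (insert (K.v 4) C) := fun _ h => .inr (.inr h)
  have h2 : K.v 2 ∈ insert (K.v 2) (insert (K.v 4) C) := .inl rfl
  have h4 : K.v 4 ∈ insert (K.v 2) (insert (K.v 4) C) := .inr (.inl rfl)
  refine ⟨K.isVertexCover.subset hsub,
    induce_connected_of_reachIn (hsub K.three_mem) fun z hz => ?_⟩
  rcases hz with rfl | rfl | hz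
  · exact .of_adj h2 (hsub K.three_mem) (K.adj (by decide))
  · exact .of_adj h4 (hsub K.three_mem) (K.adj (by decide))
  rcases K.reachIn_cases z hz with h | h | h
  · exact ((h.trans K.reachIn_one_zero.symm).mono hsub).trans_adj h2 (K.adj (by decide))
      |>.trans_adj (hsub K.three_mem) (K.adj (by decide))
  · exact h.mono hsub
  · exact (h.mono hsub).trans_adj h4 (K.adj (by decide))
      |>.trans_adj (hsub K.three_mem) (K.adj (by decide))

theorem ncard_insert_two_four (hC : C.Finite) :
    (insert (K.v 2) (insert (K.v 4) C)).ncard = C.ncard + 2 := by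
  have h24 : K.v 2 ≠ K.v 4 := K.v.injective.ne (by decide)
  rw [Set.ncard_insert_of_notMem (by simp [h24, K.two_not_mem]) (hC.insert _),
    Set.ncard_insert_of_notMem K.four_not_mem hC]

theorem isConnectedVertexCover_insert {w a b c : V} (ha : G.ReachIn C a (K.v 0))
    (hb : G.ReachIn C b (K.v 3)) (hc : G.ReachIn C c (K.v 5)) (hwa : G.Adj a w)
    (hwb : G.Adj b w) (hwc : G.Adj c w) : IsConnectedVertexCover G (insert w C) := by
  have hsub : C ⊆ insert w C := Set.subset_insert w C
  refine ⟨K.isVertexCover.subset hsub,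
    induce_connected_of_reachIn (Set.mem_insert w C) fun z hz => ?_⟩
  rcases hz with rfl | hz
  · exact .refl (Set.mem_insert z C)
  rcases K.reachIn_cases z hz with h | h | h
  · exact ((h.trans ha.symm).mono hsub).trans_adj (Set.mem_insert w C) hwa
  · exact ((h.trans hb.symm).mono hsub).trans_adj (Set.mem_insert w C) hwb
  · exact ((h.trans hc.symm).mono hsub).trans_adj (Set.mem_insert w C) hwc

def NoCommonNeighbour : Prop :=
  ∀ w a b c, G.ReachIn C a (K.v 0) → G.ReachIn C b (K.v 3) → G.ReachIn C c (K.v 5) →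
    G.Adj a w → G.Adj b w → G.Adj c w → False

variable {K}

theorem NoCommonNeighbour.reflect (hA : K.NoCommonNeighbour) : K.reflect.NoCommonNeighbour :=
  fun w a b c ha hb hc hwa hwb hwc => hA w a c b (ha.trans K.reachIn_one_zero) hc hb hwa hwc hwb

theorem adj_four_six_of_adj_five (hP7 : HFree (pathGraph 7) G) (hA : K.NoCommonNeighbour)
    {a : V} (ha : G.ReachIn C a (K.v 5)) (ha5 : G.Adj a (K.v 5)) :
    G.Adj a (K.v 4) ∧ G.Adj a (K.v 6) := by
  have key : ∀ S : Finset (Fin 7), 5 ∈ S → 0 ∉ S → 1 ∉ S → 2 ∉ S → 3 ∉ S →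
      (∀ i, ¬GapAfter S i 5) → 4 ∈ S ∧ 6 ∈ S := by decide
  simp only [← mem_cycleNbhd K.v] at ha5 ⊢
  refine key _ ha5 ?_ ?_ ?_ ?_ (not_gapAfter_five K.v hP7 a) <;> rw [mem_cycleNbhd]
  · exact ha.not_adj (.refl K.zero_mem) fun h => K.not_reachIn_zero_five h.symm
  · exact ha.not_adj K.reachIn_one_zero fun h => K.not_reachIn_zero_five h.symm
  · exact fun h => hA _ _ _ _ K.reachIn_one_zero (.refl K.three_mem) ha
      (K.adj (by decide)) (K.adj (by decide)) h
  · exact ha.not_adj (.refl K.three_mem) fun h => K.not_reachIn_three_five h.symm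

theorem eq_four_or_six_of_not_mem_of_adj_five (hP7 : HFree (pathGraph 7) G)
    (hC6 : HFree (cycleGraph 6) G) (hΔ2 : HFree Delta2 G) (hA : K.NoCommonNeighbour) {x : V}
    (hx : x ∉ C) (hx5 : G.Adj x (K.v 5)) : x = K.v 4 ∨ x = K.v 6 := by
  have key : ∀ S : Finset (Fin 7), 5 ∈ S → 2 ∉ S → 4 ∉ S → 6 ∉ S → (3 ∈ S → 0 ∉ S ∧ 1 ∉ S) →
      (∀ i, ¬GapAfter S i 5) → (∀ i, i + 4 ∈ S → ¬GapAfter S i 3) →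
      S = {4 - 1, 4 + 1} ∨ S = {6 - 1, 6 + 1} := by decide
  have hnot : ∀ {i}, K.v i ∉ C → ¬G.Adj x (K.v i) := K.isVertexCover.not_adj hx
  simp only [← mem_cycleNbhd K.v] at hx5 hnot
  refine (key _ hx5 (hnot K.two_not_mem) (hnot K.four_not_mem) (hnot K.six_not_mem) ?_
    (not_gapAfter_five K.v hP7 x) (not_gapAfter_three_of_mem K.v hC6 x)).imp
    (eq_of_cycleNbhd_eq K.v hΔ2) (eq_of_cycleNbhd_eq K.v hΔ2)
  simp only [mem_cycleNbhd] at hx5 ⊢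
  exact fun hx3 => ⟨fun hx0 => hA x _ _ _ (.refl K.zero_mem) (.refl K.three_mem)
    (.refl K.five_mem) hx0.symm hx3.symm hx5.symm, fun hx1 => hA x _ _ _ K.reachIn_one_zero
    (.refl K.three_mem) (.refl K.five_mem) hx1.symm hx3.symm hx5.symm⟩

/-- The new cover trades `v 5` for `v 4` and `v 6`. -/
theorem exists_of_reachIn_five (hP7 : HFree (pathGraph 7) G) (hC6 : HFree (cycleGraph 6) G)
    (hΔ2 : HFree Delta2 G) (hA : K.NoCommonNeighbour) (hCfin : C.Finite) {u : V}
    (hu : G.ReachIn C u (K.v 5)) (hu5 : u ≠ K.v 5) :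
    ∃ Cc, IsConnectedVertexCover G Cc ∧ Cc.ncard ≤ C.ncard + 1 := by
  set Cc := insert (K.v 4) (insert (K.v 6) (C \ {K.v 5}))
  have hsub : C \ {K.v 5} ⊆ Cc := fun _ h => .inr (.inr h)
  have h4 : K.v 4 ∈ Cc := .inl rfl
  have h6 : K.v 6 ∈ Cc := .inr (.inl rfl)
  have hD3 : ∀ z, G.ReachIn C z (K.v 5) → z ≠ K.v 5 →
      ∃ w, G.Adj w (K.v 4) ∧ G.Adj w (K.v 6) ∧ G.ReachIn Cc z w := by
    intro z hz hz5
    obtain ⟨w, hw5, hzw⟩ := hz.exists_adj_diff_singleton hz5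
    have hw := K.adj_four_six_of_adj_five hP7 hA (.of_adj hzw.right_mem.1 K.five_mem hw5) hw5
    exact ⟨w, hw.1, hw.2, hzw.mono hsub⟩
  obtain ⟨w, hw4, hw6, huw⟩ := hD3 u hu hu5
  have h64 : G.ReachIn Cc (K.v 6) (K.v 4) :=
    (ReachIn.of_adj h6 huw.right_mem hw6.symm).trans_adj h4 hw4
  refine ⟨Cc, ⟨K.isVertexCover.insert_insert_diff fun y hy hyC =>
    K.eq_four_or_six_of_not_mem_of_adj_five hP7 hC6 hΔ2 hA hyC hy.symm,
    induce_connected_of_reachIn h4 fun z hz => ?_⟩, ncard_insert_insert_diff_le K.five_mem hCfin⟩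
  rcases hz with rfl | rfl | ⟨hz, hz5⟩
  · exact .refl h4
  · exact h64
  rcases K.reachIn_cases z hz with h | h | h
  · exact ((h.diff_singleton fun h' => K.not_reachIn_zero_five (h.symm.trans h')).mono
      hsub).trans_adj h6 (K.adj (by decide)) |>.trans h64
  · exact ((h.diff_singleton fun h' => K.not_reachIn_three_five (h.symm.trans h')).mono
      hsub).trans_adj h4 (K.adj (by decide))
  · obtain ⟨w, hw4, -, hzw⟩ := hD3 z h hz5
    exact hzw.trans_adj h4 hw4

theorem eq_two_or_four_of_not_mem_of_adj_three (hP7 : HFree (pathGraph 7) G)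
    (hC6 : HFree (cycleGraph 6) G) (hΔ2 : HFree Delta2 G) (hA : K.NoCommonNeighbour) {x : V}
    (hx : x ∉ C) (hx3 : G.Adj x (K.v 3)) : x = K.v 2 ∨ x = K.v 4 :=
  (K.reflect.eq_four_or_six_of_not_mem_of_adj_five hP7 hC6 hΔ2 hA.reflect hx hx3).symm

theorem not_adj_five_of_mem (hs5 : ∀ a, G.ReachIn C a (K.v 5) → a = K.v 5) {x : V}
    (hx : x ∈ C) : ¬G.Adj x (K.v 5) := fun h =>
  G.loopless.irrefl _ (hs5 x (.of_adj hx K.five_mem h) ▸ h)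

theorem not_adj_three_of_mem (hs3 : ∀ a, G.ReachIn C a (K.v 3) → a = K.v 3) {x : V}
    (hx : x ∈ C) : ¬G.Adj x (K.v 3) :=
  K.reflect.not_adj_five_of_mem hs3 hx

theorem eq_three_or_five_of_adj_four (hA : K.NoCommonNeighbour)
    (hs3 : ∀ a, G.ReachIn C a (K.v 3) → a = K.v 3)
    (hs5 : ∀ a, G.ReachIn C a (K.v 5) → a = K.v 5) {x : V} (hx : G.Adj x (K.v 4)) :
    x = K.v 3 ∨ x = K.v 5 := by
  rcases K.reachIn_cases x ((K.isVertexCover hx).resolve_right K.four_not_mem) with h | h | h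
  · exact (hA _ _ _ _ h (.refl K.three_mem) (.refl K.five_mem) hx
      (K.adj (by decide)) (K.adj (by decide))).elim
  · exact .inl (hs3 x h)
  · exact .inr (hs5 x h)

theorem not_adj_three_four_five (hA : K.NoCommonNeighbour)
    (hs3 : ∀ a, G.ReachIn C a (K.v 3) → a = K.v 3)
    (hs5 : ∀ a, G.ReachIn C a (K.v 5) → a = K.v 5) {x : V} (hx : x ∈ C) (hx3 : x ≠ K.v 3)
    (hx5 : x ≠ K.v 5) : ¬G.Adj x (K.v 3) ∧ ¬G.Adj x (K.v 4) ∧ ¬G.Adj x (K.v 5) :=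
  ⟨not_adj_three_of_mem hs3 hx, fun h => (eq_three_or_five_of_adj_four hA hs3 hs5 h).elim hx3 hx5,
    not_adj_five_of_mem hs5 hx⟩

section SingletonComponents

variable (hP7 : HFree (pathGraph 7) G) (hC6 : HFree (cycleGraph 6) G) (hΔ2 : HFree Delta2 G)
  (hA : K.NoCommonNeighbour) (hs3 : ∀ a, G.ReachIn C a (K.v 3) → a = K.v 3)
  (hs5 : ∀ a, G.ReachIn C a (K.v 5) → a = K.v 5)

include hP7 hC6 hA hs3 hs5 in
/-- `x`, `c` and an arc of the cycle form an induced `P₇`, unless the cycle neighbourhood of `c`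
already gives an induced `P₇` or `C₆`. -/
theorem false_of_adj_of_cycleNbhd_eq_empty {x c : V} (hxc : G.Adj x c)
    (hx : cycleNbhd K.v x = ∅) (hc : c ∈ C) (hc01 : G.Adj c (K.v 0) ∨ G.Adj c (K.v 1)) :
    False := by
  have key : ∀ S : Finset (Fin 7), (0 ∈ S ∨ 1 ∈ S) → 3 ∉ S → 4 ∉ S → 5 ∉ S →
      (∀ i, ¬GapAfter S i 5) → (∀ i, i + 4 ∈ S → ¬GapAfter S i 3) → ∃ i, GapAfter S i 4 := by
    decide
  have hxv := (cycleNbhd_eq_empty_iff K.v).mp hx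
  have hc345 := not_adj_three_four_five hA hs3 hs5 hc
    (by rintro rfl; exact hxv 3 hxc) (by rintro rfl; exact hxv 5 hxc)
  simp only [← mem_cycleNbhd K.v] at hc01 hc345
  obtain ⟨i, hi⟩ := key _ hc01 hc345.1 hc345.2.1 hc345.2.2 (not_gapAfter_five K.v hP7 c)
    (not_gapAfter_three_of_mem K.v hC6 c)
  exact not_gapAfter_four_of_adj K.v hP7 hxc hx i hi

include hP7 hC6 hA hs3 hs5 in
theorem eq_or_adj_of_reachIn_zero {a : V} (ha : G.ReachIn C a (K.v 0)) :
    a = K.v 0 ∨ a = K.v 1 ∨ G.Adj a (K.v 0) ∨ G.Adj a (K.v 1) := by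
  have key : ∀ S : Finset (Fin 7), 0 ∉ S → 1 ∉ S → 3 ∉ S → 4 ∉ S → 5 ∉ S →
      (∀ i, ¬GapAfter S i 5) → (∀ i, i + 4 ∈ S → ¬GapAfter S i 3) → S = ∅ := by decide
  refine ha.induction_on (P := fun a => a = K.v 0 ∨ a = K.v 1 ∨ G.Adj a (K.v 0) ∨
    G.Adj a (K.v 1)) (.inl rfl) fun x y hx hy hxy hy01 => ?_
  by_contra! hx01
  obtain ⟨-, -, hxv0, hxv1⟩ := hx01
  rcases hy01 with rfl | rfl | hy01
  · exact hxv0 hxy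
  · exact hxv1 hxy
  have hx345 := not_adj_three_four_five hA hs3 hs5 hx
    (by rintro rfl; exact not_adj_three_of_mem hs3 hy hxy.symm)
    (by rintro rfl; exact not_adj_five_of_mem hs5 hy hxy.symm)
  simp only [← mem_cycleNbhd K.v] at hxv0 hxv1 hx345
  exact false_of_adj_of_cycleNbhd_eq_empty hP7 hC6 hA hs3 hs5 hxy
    (key _ hxv0 hxv1 hx345.1 hx345.2.1 hx345.2.2 (not_gapAfter_five K.v hP7 x)
      (not_gapAfter_three_of_mem K.v hC6 x)) hy hy01

include hP7 hC6 hΔ2 hA hs3 hs5 in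
theorem eq_two_or_four_or_six_of_not_mem {x c : V} (hx : x ∉ C) (hxc : G.Adj x c) :
    x = K.v 2 ∨ x = K.v 4 ∨ x = K.v 6 := by
  have key : ∀ S : Finset (Fin 7), 2 ∉ S → 3 ∉ S → 4 ∉ S → 5 ∉ S → 6 ∉ S →
      (∀ i, ¬GapAfter S i 5) → S = ∅ := by decide
  by_contra! hne
  obtain ⟨hx2, hx4, hx6⟩ := hne
  have hnot : ∀ {i}, K.v i ∉ C → ¬G.Adj x (K.v i) := K.isVertexCover.not_adj hx
  have hx3 : ¬G.Adj x (K.v 3) := fun h =>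
    (eq_two_or_four_of_not_mem_of_adj_three hP7 hC6 hΔ2 hA hx h).elim hx2 hx4
  have hx5 : ¬G.Adj x (K.v 5) := fun h =>
    (K.eq_four_or_six_of_not_mem_of_adj_five hP7 hC6 hΔ2 hA hx h).elim hx4 hx6
  simp only [← mem_cycleNbhd K.v] at hnot hx3 hx5
  have hS := key _ (hnot K.two_not_mem) hx3 (hnot K.four_not_mem) hx5 (hnot K.six_not_mem)
    (not_gapAfter_five K.v hP7 x)
  have hxv := (cycleNbhd_eq_empty_iff K.v).mp hS
  have hc : c ∈ C := (K.isVertexCover hxc).resolve_left hx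
  rcases K.reachIn_cases c hc with h | h | h
  · rcases eq_or_adj_of_reachIn_zero hP7 hC6 hA hs3 hs5 h with rfl | rfl | h01 | h01
    · exact hxv 0 hxc
    · exact hxv 1 hxc
    · exact false_of_adj_of_cycleNbhd_eq_empty hP7 hC6 hA hs3 hs5 hxc hS hc (.inl h01)
    · exact false_of_adj_of_cycleNbhd_eq_empty hP7 hC6 hA hs3 hs5 hxc hS hc (.inr h01)
  · exact hxv 3 (hs3 c h ▸ hxc)
  · exact hxv 5 (hs5 c h ▸ hxc)

include hP7 hC6 hΔ2 hA hs3 hs5 in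
/-- The new cover trades `u` for `v 4` and `v 6`. -/
theorem exists_of_adj_six (hCfin : C.Finite) {u : V} (hu : u ∈ C) (hu0 : u ≠ K.v 0)
    (hu1 : u ≠ K.v 1) (hu3 : u ≠ K.v 3) (hu5 : u ≠ K.v 5) (hu6 : G.Adj u (K.v 6)) :
    ∃ Cc, IsConnectedVertexCover G Cc ∧ Cc.ncard ≤ C.ncard + 1 := by
  set Cc := insert (K.v 4) (insert (K.v 6) (C \ {u}))
  have hsub : C \ {u} ⊆ Cc := fun _ h => .inr (.inr h)
  have h4 : K.v 4 ∈ Cc := .inl rfl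
  have h6 : K.v 6 ∈ Cc := .inr (.inl rfl)
  have h0 : K.v 0 ∈ Cc := hsub ⟨K.zero_mem, hu0.symm⟩
  have h1 : K.v 1 ∈ Cc := hsub ⟨K.one_mem, hu1.symm⟩
  have h3 : K.v 3 ∈ Cc := hsub ⟨K.three_mem, hu3.symm⟩
  have h5 : K.v 5 ∈ Cc := hsub ⟨K.five_mem, hu5.symm⟩
  have h60 : G.ReachIn Cc (K.v 6) (K.v 0) := .of_adj h6 h0 (K.adj (by decide))
  have h50 : G.ReachIn Cc (K.v 5) (K.v 0) := (ReachIn.of_adj h5 h6 (K.adj (by decide))).trans h60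
  have h40 : G.ReachIn Cc (K.v 4) (K.v 0) := (ReachIn.of_adj h4 h5 (K.adj (by decide))).trans h50
  have h10 : G.ReachIn Cc (K.v 1) (K.v 0) := .of_adj h1 h0 (K.adj (by decide))
  have hu345 := not_adj_three_four_five hA hs3 hs5 hu hu3 hu5
  refine ⟨Cc, ⟨K.isVertexCover.insert_insert_diff fun y hy hyC => ?_,
    induce_connected_of_reachIn h0 fun z hz => ?_⟩, ncard_insert_insert_diff_le hu hCfin⟩
  · rcases eq_two_or_four_or_six_of_not_mem hP7 hC6 hΔ2 hA hs3 hs5 hyC hy.symm with rfl | rfl | rfl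
    · have key : ∀ S : Finset (Fin 7), 2 ∈ S → 3 ∉ S → 4 ∉ S → 5 ∉ S → GapAfter S 2 3 := by
        decide
      simp only [← mem_cycleNbhd K.v] at hy hu6 hu345
      exact (not_gapAfter_three_of_mem K.v hC6 u 2 hu6
        (key _ hy hu345.1 hu345.2.1 hu345.2.2)).elim
    · exact .inl rfl
    · exact .inr rfl
  rcases hz with rfl | rfl | ⟨hz, hzu⟩
  · exact h40
  · exact h60
  have hzCc : z ∈ Cc := hsub ⟨hz, hzu⟩
  rcases K.reachIn_cases z hz with h | h | h
  · rcases eq_or_adj_of_reachIn_zero hP7 hC6 hA hs3 hs5 h with rfl | rfl | h' | h'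
    · exact .refl h0
    · exact h10
    · exact .of_adj hzCc h0 h'
    · exact (ReachIn.of_adj hzCc h1 h').trans h10
  · rw [hs3 z h]; exact (ReachIn.of_adj h3 h4 (K.adj (by decide))).trans h40
  · rw [hs5 z h]; exact h50

include hP7 hC6 hΔ2 hA hs3 hs5 in
theorem exists_of_singletons (h5 : 5 ≤ C.ncard) :
    ∃ Cc, IsConnectedVertexCover G Cc ∧ Cc.ncard ≤ C.ncard + 1 := by
  have hCfin : C.Finite := Set.finite_of_ncard_pos (by omega)
  obtain ⟨u, hu, hu'⟩ := Set.exists_mem_notMem_of_ncard_lt_ncard (s := {K.v 0, K.v 1, K.v 3, K.v 5})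
    (t := C) (by
      have := Set.ncard_insert_le (K.v 0) {K.v 1, K.v 3, K.v 5}
      have := Set.ncard_insert_le (K.v 1) {K.v 3, K.v 5}
      have := Set.ncard_insert_le (K.v 3) {K.v 5}
      have := Set.ncard_singleton (K.v 5)
      omega)
  simp only [Set.mem_insert_iff, Set.mem_singleton_iff, not_or] at hu'
  obtain ⟨hu0, hu1, hu3, hu5⟩ := hu'
  have hu01 : G.Adj u (K.v 0) ∨ G.Adj u (K.v 1) := by
    rcases K.reachIn_cases u hu with h | h | h
    · rcases eq_or_adj_of_reachIn_zero hP7 hC6 hA hs3 hs5 h with h' | h' | h'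
      exacts [absurd h' hu0, absurd h' hu1, h']
    · exact absurd (hs3 u h) hu3
    · exact absurd (hs5 u h) hu5
  have key : ∀ S : Finset (Fin 7), (0 ∈ S ∨ 1 ∈ S) → 3 ∉ S → 4 ∉ S → 5 ∉ S →
      (∀ i, ¬GapAfter S i 5) → 2 ∈ S ∨ 6 ∈ S := by decide
  have hu345 := not_adj_three_four_five hA hs3 hs5 hu hu3 hu5
  simp only [← mem_cycleNbhd K.v] at hu01 hu345
  rcases key _ hu01 hu345.1 hu345.2.1 hu345.2.2 (not_gapAfter_five K.v hP7 u) with h2 | h6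
  · exact exists_of_adj_six (K := K.reflect) hP7 hC6 hΔ2 hA.reflect hs5 hs3 hCfin hu hu1 hu0
      hu5 hu3 ((mem_cycleNbhd K.v).mp h2)
  · exact exists_of_adj_six hP7 hC6 hΔ2 hA hs3 hs5 hCfin hu hu0 hu1 hu3 hu5
      ((mem_cycleNbhd K.v).mp h6)

end SingletonComponents

theorem exists_of_five_le (K : SevenCycleConfig G C) (hP7 : HFree (pathGraph 7) G)
    (hC6 : HFree (cycleGraph 6) G) (hΔ2 : HFree Delta2 G) (h5 : 5 ≤ C.ncard) :
    ∃ Cc, IsConnectedVertexCover G Cc ∧ Cc.ncard ≤ C.ncard + 1 := by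
  by_cases hA : K.NoCommonNeighbour
  · by_cases hs5 : ∀ a, G.ReachIn C a (K.v 5) → a = K.v 5
    · by_cases hs3 : ∀ a, G.ReachIn C a (K.v 3) → a = K.v 3
      · exact exists_of_singletons hP7 hC6 hΔ2 hA hs3 hs5 h5
      · simp only [not_forall] at hs3
        obtain ⟨u, hu, hu3⟩ := hs3
        exact K.reflect.exists_of_reachIn_five hP7 hC6 hΔ2 hA.reflect
          (Set.finite_of_ncard_pos (by omega)) hu hu3
    · simp only [not_forall] at hs5
      obtain ⟨u, hu, hu5⟩ := hs5
      exact K.exists_of_reachIn_five hP7 hC6 hΔ2 hA (Set.finite_of_ncard_pos (by omega)) hu hu5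
  · simp only [NoCommonNeighbour, not_forall] at hA
    obtain ⟨w, a, b, c, ha, hb, hc, hwa, hwb, hwc, -⟩ := hA
    exact ⟨insert w C, K.isConnectedVertexCover_insert ha hb hc hwa hwb hwc,
      Set.ncard_insert_le w C⟩

end SevenCycleConfig

theorem seven_cycle_lemma_general {V : Type} (G : SimpleGraph V)
    (hC6 : HFree (SimpleGraph.cycleGraph 6) G) (hP7 : HFree (SimpleGraph.pathGraph 7) G)
    (hD2 : HFree Delta2 G)
    (C : Set V) (hC : _root_.IsVertexCover G C)
    (h3 : Nat.card (G.induce C).ConnectedComponent = 3)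
    (f : SimpleGraph.cycleGraph 7 ↪g G)
    (hmeet : ∀ K : (G.induce C).ConnectedComponent,
      ∃ i : Fin 7, f i ∈ Subtype.val '' K.supp) :
    ∃ Cc : Set V, IsConnectedVertexCover G Cc ∧
      (4 < C.ncard → Cc.ncard ≤ C.ncard + 1) ∧
      (C.ncard = 4 → Cc.ncard = 6) := by
  obtain ⟨K⟩ := SevenCycleConfig.nonempty hC h3 f hmeet
  by_cases h4 : 4 < C.ncard
  · obtain ⟨Cc, hCc, hcard⟩ := K.exists_of_five_le hP7 hC6 hD2 h4
    exact ⟨Cc, hCc, fun _ => hcard, by omega⟩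
  · refine ⟨_, K.isConnectedVertexCover_insert_two_four, by omega, fun hC4 => ?_⟩
    rw [K.ncard_insert_two_four (Set.finite_of_ncard_ne_zero (by omega)), hC4]

/-- If `G` is a connected `(C₆, P₇, Δ₁, Δ₂)`-free graph, `C` is a vertex cover whose
induced subgraph has exactly three connected components, and `G` has an induced
7-cycle meeting all three components, then there is a connected vertex cover `C_c`
with `|C_c| ≤ |C| + 1` if `|C| > 4`, and `|C_c| = 6` if `|C| = 4`. -/
theorem seven_cycle_lemma {V : Type} [Fintype V] (G : SimpleGraph V)
    (hconn : G.Connected)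
    (hC6 : HFree (SimpleGraph.cycleGraph 6) G) (hP7 : HFree (SimpleGraph.pathGraph 7) G)
    (hD1 : HFree Delta1 G) (hD2 : HFree Delta2 G)
    (C : Set V) (hC : _root_.IsVertexCover G C)
    (h3 : Nat.card (G.induce C).ConnectedComponent = 3)
    (f : SimpleGraph.cycleGraph 7 ↪g G)
    (hmeet : ∀ K : (G.induce C).ConnectedComponent,
      ∃ i : Fin 7, f i ∈ Subtype.val '' K.supp) :
    ∃ Cc : Set V, IsConnectedVertexCover G Cc ∧
      (4 < C.ncard → Cc.ncard ≤ C.ncard + 1) ∧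
      (C.ncard = 4 → Cc.ncard = 6) :=
  seven_cycle_lemma_general G hC6 hP7 hD2 C hC h3 f hmeet
end
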